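/- Let x ∈ gl(n, ℂ) be strongly regular, i.e., for each i, the cutoff x_i is a regular element of gl(i, ℂ) and z_{g_i}(x_i) ∩ z_{g_{i+1}}(x_{i+1}) = 0 for 1 ≤ i ≤ n−1 (where centralizers are taken inside gl(n,ℂ) via the standard embeddings). Then for each 1 ≤ i ≤ n−1, the intersection of the group centralizers Z_{G_i}(x_i) ∩ Z_{G_{i+1}}(x_{i+1}) is trivial, where G_k ≅ GL(k, ℂ) is embedded in GL(n, ℂ) as block matrices with identity in the lower right corner. -/

import Mathlib

noncomputable section

open Matrix

/-- The cutoff `x_k`: the upper left `k × k` corner of `x`, viewed in `gl(n,ℂ)`. -/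
def cutoff (n k : ℕ) (x : Matrix (Fin n) (Fin n) ℂ) : Matrix (Fin n) (Fin n) ℂ :=
  fun a b => if a.1 < k ∧ b.1 < k then x a b else 0

/-- The subalgebra `g_i ⊂ gl(n,ℂ)` of matrices supported in the upper left `i × i` block. -/
def corner (n i : ℕ) : Submodule ℂ (Matrix (Fin n) (Fin n) ℂ) where
  carrier := {x | ∀ a b : Fin n, ¬(a.1 < i ∧ b.1 < i) → x a b = 0}
  add_mem' := by
    intro x y hx hy a b h
    simp [Matrix.add_apply, hx a b h, hy a b h]
  zero_mem' := by intro a b h; rfl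
  smul_mem' := by
    intro c x hx a b h
    simp [Matrix.smul_apply, hx a b h]

/-- The centralizer of `y` in `gl(n,ℂ)`, as a subspace. -/
def matCentralizer (n : ℕ) (y : Matrix (Fin n) (Fin n) ℂ) :
    Submodule ℂ (Matrix (Fin n) (Fin n) ℂ) :=
  LinearMap.ker (LinearMap.mulLeft ℂ y - LinearMap.mulRight ℂ y)

/-- `z_{g_i}(x_i)`: the centralizer of `x_i` inside `g_i`, viewed in `gl(n,ℂ)`. -/
def cornerCent (n i : ℕ) (x : Matrix (Fin n) (Fin n) ℂ) :
    Submodule ℂ (Matrix (Fin n) (Fin n) ℂ) :=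
  corner n i ⊓ matCentralizer n (cutoff n i x)

/-- Membership in `G_i ⊂ GL(n,ℂ)`: agrees with the identity matrix outside the
upper left `i × i` block. -/
def inGL (n i : ℕ) (g : Matrix (Fin n) (Fin n) ℂ) : Prop :=
  ∀ a b : Fin n, ¬(a.1 < i ∧ b.1 < i) → g a b = (1 : Matrix (Fin n) (Fin n) ℂ) a b

/-- Strong regularity, via the Kostant–Wallach characterization: each cutoff `x_i`
is regular in `g_i` and consecutive centralizers intersect trivially. -/
def StronglyRegularChar (n : ℕ) (x : Matrix (Fin n) (Fin n) ℂ) : Prop :=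
  (∀ i, 1 ≤ i → i ≤ n → Module.finrank ℂ (cornerCent n i x) = i) ∧
  (∀ i, 1 ≤ i → i ≤ n - 1 → cornerCent n i x ⊓ cornerCent n (i + 1) x = ⊥)

theorem mem_matCentralizer_iff {n : ℕ} {y A : Matrix (Fin n) (Fin n) ℂ} :
    A ∈ matCentralizer n y ↔ y * A = A * y := by
  simp only [matCentralizer, LinearMap.mem_ker, LinearMap.sub_apply, LinearMap.mulLeft_apply,
    LinearMap.mulRight_apply, sub_eq_zero]

theorem sub_one_mem_matCentralizer {n : ℕ} {g y : Matrix (Fin n) (Fin n) ℂ}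
    (hgy : g * y = y * g) : g - 1 ∈ matCentralizer n y := by
  rw [mem_matCentralizer_iff, mul_sub, sub_mul, mul_one, one_mul, hgy]

theorem corner_mono {n i j : ℕ} (hij : i ≤ j) : corner n i ≤ corner n j :=
  fun _ hA a b hab => hA a b fun ⟨ha, hb⟩ => hab ⟨ha.trans_le hij, hb.trans_le hij⟩

theorem sub_one_mem_corner {n i : ℕ} {g : Matrix (Fin n) (Fin n) ℂ} (hg : inGL n i g) :
    g - 1 ∈ corner n i :=
  fun a b hab => by rw [Matrix.sub_apply, hg a b hab, sub_self]

/-- If `x` is strongly regular then `Z_{G_i}(x_i) ∩ Z_{G_{i+1}}(x_{i+1})` is trivial. -/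
theorem stmt4 (n : ℕ) (x : Matrix (Fin n) (Fin n) ℂ) (hx : StronglyRegularChar n x)
    (i : ℕ) (h1 : 1 ≤ i) (h2 : i ≤ n - 1)
    (g : (Matrix (Fin n) (Fin n) ℂ)ˣ)
    (hgi : inGL n i (g : Matrix (Fin n) (Fin n) ℂ))
    (hci : (g : Matrix (Fin n) (Fin n) ℂ) * cutoff n i x =
      cutoff n i x * (g : Matrix (Fin n) (Fin n) ℂ))
    (hci1 : (g : Matrix (Fin n) (Fin n) ℂ) * cutoff n (i + 1) x =
      cutoff n (i + 1) x * (g : Matrix (Fin n) (Fin n) ℂ)) :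
    g = 1 := by
  have hcorner := sub_one_mem_corner hgi
  have hmem : (g : Matrix (Fin n) (Fin n) ℂ) - 1 ∈ cornerCent n i x ⊓ cornerCent n (i + 1) x :=
    ⟨⟨hcorner, sub_one_mem_matCentralizer hci⟩,
      ⟨corner_mono i.le_succ hcorner, sub_one_mem_matCentralizer hci1⟩⟩
  rw [hx.2 i h1 h2, Submodule.mem_bot, sub_eq_zero] at hmem
  exact Units.ext hmem
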